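/- (Theorem 1: dynamic regret of inexact online gradient descent under quadratic growth, deterministic errors.) Let A : ℝⁿ → ℝᵐ be a nonzero linear map with χ := σ_min/σ_max. For k = 1, …, K let f_k : ℝⁿ → ℝ be convex and differentiable with L-Lipschitz gradient, with minimizer set X_k* = {x : A x = u_k*} (u_k* in the range of A), ∇f_k vanishing on X_k*, and quadratic growth f_k(x) − f_k* ≥ (μ/2) dist(x, X_k*)², μ > 0. Fix ν ≥ 0, α > 0 with αL(1+ν)² < 1; set ℓ² := 1 − μα(1 − αL(1+ν)²) + 2ναL, assume 0 < ℓ < χ, and ζ := α(1+αL)/ℓ. Let x_1 ∈ ℝⁿ and x_{k+1} = x_k − α(∇f_k(x_k) + e_k) with errors ‖e_k‖ ≤ ε_k + ν‖∇f_k(x_k)‖, ε_k ≤ ε. Suppose there exist x_k* ∈ X_k* with ‖x_{k+1}* − x_k*‖ ≤ σ_v for all k; set W_K := Σ_{k=2}^K ‖x_k* − x_{k−1}*‖ and E_K := Σ_{k=1}^K ε_k. Then Σ_{k=1}^K (f_k(x_k) − f_k(x_k*)) ≤ [L(ζε + σ_v)/(χ − ℓ) + L·dist(x_1, X_1*)]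 · (‖x_1 − x_1*‖ + W_K + ζ E_K)/(χ − ℓ). -/

import Mathlib

/-!
Let `d_k` be the distance from `x_k` to `X_k*` and `y` the projection of `x_k` onto `X_k*`.
Convexity, the bound `‖∇f_k x‖² ≤ 2L (f_k x - f_k*)` from the descent lemma, and quadratic growth
give `‖x_{k+1} - y‖ ≤ ℓ d_k + α ε_k`. The minimizer sets are fibres of `A`, and
`σ_min · dist(x, {z | A z = u}) ≤ ‖A x - u‖`, so moving from the fibre `X_k*` to `X_{k+1}*` costs
at most `σ_max ‖x_{k+1}* - x_k*‖`; this yields the linear recursion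
`χ d_{k+1} ≤ ℓ d_k + α ε_k + ‖x_{k+1}* - x_k*‖`. As `ℓ < χ`, the recursion bounds every `d_k`
uniformly and `Σ d_k` by the initial distance plus the path length and the errors, and the regret
is at most `Σ (L/2) d_k² ≤ (L/2) · max d_k · Σ d_k`.
-/

open scoped RealInnerProductSpace
open Metric

theorem add_mul_le_of_sq_le {a d G α ν L r ℓ : ℝ} (hd : 0 ≤ d) (hG : 0 ≤ G)
    (hα : 0 ≤ α) (hν : 0 ≤ ν) (hr : r ≤ 1) (hGd : G ≤ L * d) (hℓ : 0 ≤ ℓ)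
    (hℓsq : ℓ ^ 2 = r + 2 * ν * α * L)
    (hsq : a ^ 2 ≤ r * d ^ 2 - α ^ 2 * ((1 + ν) ^ 2 - 1) * G ^ 2) :
    a + α * ν * G ≤ ℓ * d := by
  have hslack : 0 ≤ α ^ 2 * ((1 + ν) ^ 2 - 1) * G ^ 2 := by
    have : 0 ≤ (1 + ν) ^ 2 - 1 := by nlinarith
    positivity
  have had : a ≤ d := by nlinarith
  have hcross : a * G ≤ L * d ^ 2 := by nlinarith [mul_le_mul had hGd hG hd]
  refine le_of_sq_le_sq ?_ (by positivity)
  have hαν : 0 ≤ α * ν := mul_nonneg hα hν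
  have : (ℓ * d) ^ 2 = (r + 2 * ν * α * L) * d ^ 2 := by rw [mul_pow, hℓsq]
  nlinarith [mul_le_mul_of_nonneg_left hcross hαν, mul_nonneg (mul_nonneg hαν hα) (sq_nonneg G)]

section SmoothConvex

open Set AffineMap

variable {H : Type*} [NormedAddCommGroup H] [InnerProductSpace ℝ H] [CompleteSpace H]
  {f : H → ℝ}

theorem hasDerivAt_comp_lineMap {a b : H} {t : ℝ} (hf : DifferentiableAt ℝ f (lineMap a b t)) :
    HasDerivAt (f ∘ lineMap a b) ⟪gradient f (lineMap a b t), b - a⟫ t := by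
  rw [inner_gradient_left]
  exact hf.hasFDerivAt.comp_hasDerivAt t hasDerivAt_lineMap

theorem ConvexOn.add_inner_gradient_le (hc : ConvexOn ℝ univ f) {a : H}
    (hf : DifferentiableAt ℝ f a) (b : H) : f a + ⟪gradient f a, b - a⟫ ≤ f b := by
  have hslope := (hc.comp_affineMap (lineMap a b)).le_slope_of_hasDerivAt (mem_univ 0)
    (mem_univ 1) one_pos (hasDerivAt_comp_lineMap (by simpa using hf))
  simp only [slope_def_field, Function.comp_apply, lineMap_apply_zero, lineMap_apply_one,
    sub_zero, div_one] at hslope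
  linarith

theorem ConvexOn.le_of_gradient_eq_zero (hc : ConvexOn ℝ univ f) {y : H}
    (hf : DifferentiableAt ℝ f y) (hy : gradient f y = 0) (z : H) : f y ≤ f z := by
  simpa [hy] using hc.add_inner_gradient_le hf z

theorem le_add_inner_gradient_add_sq (hf : Differentiable ℝ f) {L : ℝ}
    (hLip : ∀ u v, ‖gradient f u - gradient f v‖ ≤ L * ‖u - v‖) (a b : H) :
    f b ≤ f a + ⟪gradient f a, b - a⟫ + L / 2 * ‖b - a‖ ^ 2 := by
  set g := gradient f a
  -- the gap between `f` and its quadratic upper model along the segment is antitone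
  set φ : ℝ → ℝ := fun t ↦ f (lineMap a b t) - t * ⟪g, b - a⟫ - L / 2 * t ^ 2 * ‖b - a‖ ^ 2
  have hφ (t : ℝ) :
      HasDerivAt φ (⟪gradient f (lineMap a b t) - g, b - a⟫ - L * t * ‖b - a‖ ^ 2) t := by
    have := ((hasDerivAt_comp_lineMap (a := a) (b := b) (hf _)).sub
      ((hasDerivAt_id t).mul_const ⟪g, b - a⟫)).sub
        (((hasDerivAt_pow 2 t).const_mul (L / 2)).mul_const (‖b - a‖ ^ 2))
    refine this.congr_deriv ?_
    rw [inner_sub_left]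
    ring
  have hanti : AntitoneOn φ (Ici 0) := by
    refine antitoneOn_of_hasDerivWithinAt_nonpos (convex_Ici 0)
      (HasDerivAt.continuousOn fun t _ ↦ hφ t) (fun t _ ↦ (hφ t).hasDerivWithinAt) fun t ht ↦ ?_
    rw [interior_Ici, mem_Ioi] at ht
    have hdist : ‖lineMap a b t - a‖ = t * ‖b - a‖ := by
      rw [← dist_eq_norm, dist_lineMap_left, Real.norm_of_nonneg ht.le, dist_eq_norm']
    have := calc ⟪gradient f (lineMap a b t) - g, b - a⟫
        ≤ ‖gradient f (lineMap a b t) - g‖ * ‖b - a‖ := real_inner_le_norm _ _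
      _ ≤ L * ‖lineMap a b t - a‖ * ‖b - a‖ := by gcongr; exact hLip _ _
      _ = L * t * ‖b - a‖ ^ 2 := by rw [hdist]; ring
    linarith
  have := hanti (mem_Ici.2 le_rfl) (mem_Ici.2 zero_le_one) zero_le_one
  simp only [φ, lineMap_apply_zero, lineMap_apply_one] at this
  linarith

theorem sq_norm_gradient_le (hf : Differentiable ℝ f) {L : ℝ} (hL : 0 < L)
    (hLip : ∀ u v, ‖gradient f u - gradient f v‖ ≤ L * ‖u - v‖) {y : H} (hy : ∀ z, f y ≤ f z)
    (x : H) : ‖gradient f x‖ ^ 2 ≤ 2 * L * (f x - f y) := by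
  set g := gradient f x
  have hdescent := le_add_inner_gradient_add_sq hf hLip x (x - L⁻¹ • g)
  rw [sub_sub_cancel_left, inner_neg_right, norm_neg, real_inner_smul_right,
    real_inner_self_eq_norm_sq, norm_smul, Real.norm_of_nonneg (inv_nonneg.2 hL.le)] at hdescent
  have hcoef : L * (L⁻¹ * ‖g‖ ^ 2 - L / 2 * (L⁻¹ * ‖g‖) ^ 2) = ‖g‖ ^ 2 / 2 := by
    field_simp; ring
  nlinarith [hy (x - L⁻¹ • g)]

theorem sub_le_half_mul_infDist_sq [ProperSpace H] (hc : ConvexOn ℝ univ f)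
    (hf : Differentiable ℝ f) {L : ℝ}
    (hLip : ∀ u v, ‖gradient f u - gradient f v‖ ≤ L * ‖u - v‖) {X : Set H} (hX : IsClosed X)
    {w : H} (hw : w ∈ X) (hgrad : ∀ y ∈ X, gradient f y = 0) (x : H) :
    f x - f w ≤ L / 2 * infDist x X ^ 2 := by
  obtain ⟨y, hy, hxy⟩ := hX.exists_infDist_eq_dist ⟨w, hw⟩ x
  have := le_add_inner_gradient_add_sq hf hLip y x
  rw [hgrad y hy, inner_zero_left] at this
  rw [hxy, dist_eq_norm]
  linarith [hc.le_of_gradient_eq_zero (hf y) (hgrad y hy) w]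

theorem ConvexOn.norm_sub_smul_gradient_sq_le (hc : ConvexOn ℝ univ f) (hf : Differentiable ℝ f)
    {L μ α β : ℝ} (hL : 0 < L) (hα : 0 ≤ α) (hβ : 0 ≤ β) (hαβ : α * L * β ≤ 1)
    (hLip : ∀ u v, ‖gradient f u - gradient f v‖ ≤ L * ‖u - v‖) {x y : H}
    (hy : gradient f y = 0) (hQG : μ / 2 * ‖x - y‖ ^ 2 ≤ f x - f y) :
    ‖x - y - α • gradient f x‖ ^ 2 ≤
      (1 - α * μ * (1 - α * L * β)) * ‖x - y‖ ^ 2 - α ^ 2 * (β - 1) * ‖gradient f x‖ ^ 2 := by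
  set g := gradient f x
  have hinner : f x - f y ≤ ⟪g, x - y⟫ := by
    have := hc.add_inner_gradient_le (hf x) y
    rw [← neg_sub x y, inner_neg_right] at this
    linarith
  have hgrad := sq_norm_gradient_le hf hL hLip (hc.le_of_gradient_eq_zero (hf y) hy) x
  have hexpand : ‖x - y - α • g‖ ^ 2 = ‖x - y‖ ^ 2 - 2 * α * ⟪g, x - y⟫ + α ^ 2 * ‖g‖ ^ 2 := by
    rw [norm_sub_sq_real, real_inner_smul_right, norm_smul, Real.norm_of_nonneg hα,
      real_inner_comm]
    ring
  -- split `2α (f x - f y)` with weights `1 - αLβ` and `αLβ`: quadratic growth bounds the first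
  -- part, `hgrad` the second
  have h₁ : 0 ≤ α * (1 - α * L * β) * (2 * (f x - f y) - μ * ‖x - y‖ ^ 2) :=
    mul_nonneg (mul_nonneg hα (by linarith)) (by linarith)
  have h₂ : 0 ≤ α ^ 2 * β * (2 * L * (f x - f y) - ‖g‖ ^ 2) :=
    mul_nonneg (by positivity) (by linarith)
  nlinarith [mul_le_mul_of_nonneg_left hinner hα]

theorem ConvexOn.norm_sub_smul_gradient_add_sub_le (hc : ConvexOn ℝ univ f)
    (hf : Differentiable ℝ f) {L μ α ν ℓ ε : ℝ} (hL : 0 < L) (hμ : 0 ≤ μ) (hα : 0 ≤ α)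
    (hν : 0 ≤ ν) (hstep : α * L * (1 + ν) ^ 2 ≤ 1) (hℓ : 0 ≤ ℓ)
    (hℓsq : ℓ ^ 2 = 1 - μ * α * (1 - α * L * (1 + ν) ^ 2) + 2 * ν * α * L)
    (hLip : ∀ u v, ‖gradient f u - gradient f v‖ ≤ L * ‖u - v‖) {x y e : H}
    (hy : gradient f y = 0) (hQG : μ / 2 * ‖x - y‖ ^ 2 ≤ f x - f y)
    (he : ‖e‖ ≤ ε + ν * ‖gradient f x‖) :
    ‖x - α • (gradient f x + e) - y‖ ≤ ℓ * ‖x - y‖ + α * ε := by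
  set g := gradient f x
  have hgd : ‖g‖ ≤ L * ‖x - y‖ := by simpa [hy] using hLip x y
  have hexact : ‖x - y - α • g‖ + α * ν * ‖g‖ ≤ ℓ * ‖x - y‖ :=
    add_mul_le_of_sq_le (norm_nonneg _) (norm_nonneg _) hα hν
      (by nlinarith [mul_nonneg (mul_nonneg hα hμ) (sub_nonneg.2 hstep)]) hgd hℓ
      (by rw [hℓsq]; ring)
      (hc.norm_sub_smul_gradient_sq_le hf hL hα (by positivity) hstep hLip hy hQG)
  calc ‖x - α • (g + e) - y‖ = ‖(x - y - α • g) - α • e‖ := by rw [smul_add]; abel_nf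
    _ ≤ ‖x - y - α • g‖ + α * ‖e‖ := by
      simpa [norm_smul, Real.norm_of_nonneg hα] using norm_sub_le (x - y - α • g) (α • e)
    _ ≤ ℓ * ‖x - y‖ + α * ε := by nlinarith [mul_le_mul_of_nonneg_left he hα]

end SmoothConvex

section MinSingularValue

open Set

variable {E F : Type*} [NormedAddCommGroup E] [InnerProductSpace ℝ E] [NormedAddCommGroup F]
  [NormedSpace ℝ F] (A : E →L[ℝ] F)

noncomputable def minSingularValue : ℝ :=
  sInf {c : ℝ | ∃ x : E, x ≠ 0 ∧ x ∈ (LinearMap.ker (A : E →ₗ[ℝ] F))ᗮ ∧ c = ‖A x‖ / ‖x‖}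

theorem minSingularValue_nonneg : 0 ≤ minSingularValue A :=
  Real.sInf_nonneg fun _ ⟨_, _, _, hc⟩ ↦ hc ▸ by positivity

theorem minSingularValue_le_ratio {v : E} (hv : v ∈ (LinearMap.ker (A : E →ₗ[ℝ] F))ᗮ)
    (hv0 : v ≠ 0) : minSingularValue A ≤ ‖A v‖ / ‖v‖ :=
  csInf_le ⟨0, fun _ ⟨_, _, _, hc⟩ ↦ hc ▸ by positivity⟩ ⟨v, hv0, hv, rfl⟩

theorem minSingularValue_mul_norm_le {v : E} (hv : v ∈ (LinearMap.ker (A : E →ₗ[ℝ] F))ᗮ) :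
    minSingularValue A * ‖v‖ ≤ ‖A v‖ := by
  rcases eq_or_ne v 0 with rfl | hv0
  · simp
  · exact (le_div_iff₀ (norm_pos_iff.2 hv0)).1 (minSingularValue_le_ratio A hv hv0)

theorem minSingularValue_le_opNorm : minSingularValue A ≤ ‖A‖ := by
  rcases (({c : ℝ | ∃ x : E, x ≠ 0 ∧ x ∈ (LinearMap.ker (A : E →ₗ[ℝ] F))ᗮ ∧
    c = ‖A x‖ / ‖x‖}).eq_empty_or_nonempty) with hempty | ⟨_, v, hv0, hv, rfl⟩
  · rw [minSingularValue, hempty, Real.sInf_empty]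
    exact norm_nonneg A
  · exact (minSingularValue_le_ratio A hv hv0).trans
      (div_le_of_le_mul₀ (norm_nonneg v) (norm_nonneg A) (A.le_opNorm v))

theorem minSingularValue_mul_infDist_le [CompleteSpace E] (x w : E) :
    minSingularValue A * infDist x {z | A z = A w} ≤ ‖A (x - w)‖ := by
  have : CompleteSpace (LinearMap.ker (A : E →ₗ[ℝ] F)) := A.isClosed_ker.completeSpace_coe
  obtain ⟨p, hp, q, hq, hpq⟩ :=
    (LinearMap.ker (A : E →ₗ[ℝ] F)).exists_add_mem_mem_orthogonal (x - w)
  have hAq : A q = A (x - w) := by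
    rw [hpq, map_add, show A p = 0 from hp, zero_add]
  have hmem : x - q ∈ {z | A z = A w} := by
    simp only [mem_ofPred_eq, map_sub, hAq, sub_sub_cancel]
  calc minSingularValue A * infDist x {z | A z = A w}
      ≤ minSingularValue A * ‖q‖ := by
        gcongr
        · exact minSingularValue_nonneg A
        · simpa [dist_eq_norm] using infDist_le_dist_of_mem (x := x) hmem
    _ ≤ ‖A (x - w)‖ := hAq ▸ minSingularValue_mul_norm_le A hq

theorem minSingularValue_mul_infDist_le_opNorm_mul [CompleteSpace E] {x y w w' : E}
    (hy : A y = A w) :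
    minSingularValue A * infDist x {z | A z = A w'} ≤ ‖A‖ * (‖x - y‖ + ‖w' - w‖) := by
  have hsplit : x - w' = (x - y) - (w' - w) + (y - w) := by abel
  have hyw : A (y - w) = 0 := by rw [map_sub, hy, sub_self]
  calc minSingularValue A * infDist x {z | A z = A w'} ≤ ‖A (x - w')‖ :=
        minSingularValue_mul_infDist_le A x w'
    _ ≤ ‖A‖ * ‖(x - y) - (w' - w)‖ := by
        rw [hsplit, map_add, hyw, add_zero]; exact A.le_opNorm _
    _ ≤ ‖A‖ * (‖x - y‖ + ‖w' - w‖) := by gcongr; exact norm_sub_le _ _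

end MinSingularValue

section InexactGradientStep

variable {E F : Type*} [NormedAddCommGroup E] [InnerProductSpace ℝ E] [FiniteDimensional ℝ E]
  [NormedAddCommGroup F] [NormedSpace ℝ F]

theorem ConvexOn.minSingularValue_div_opNorm_mul_infDist_le (A : E →L[ℝ] F) (hA : A ≠ 0)
    {f : E → ℝ} (hc : ConvexOn ℝ Set.univ f) (hf : Differentiable ℝ f) {L μ α ν ℓ ε : ℝ}
    (hL : 0 < L) (hμ : 0 ≤ μ) (hα : 0 ≤ α) (hν : 0 ≤ ν) (hstep : α * L * (1 + ν) ^ 2 ≤ 1)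
    (hℓ : 0 ≤ ℓ) (hℓsq : ℓ ^ 2 = 1 - μ * α * (1 - α * L * (1 + ν) ^ 2) + 2 * ν * α * L)
    (hLip : ∀ u v, ‖gradient f u - gradient f v‖ ≤ L * ‖u - v‖) {x e w w' : E}
    (hgrad : ∀ y ∈ {z | A z = A w}, gradient f y = 0)
    (hQG : μ / 2 * infDist x {z | A z = A w} ^ 2 ≤ f x - f w)
    (he : ‖e‖ ≤ ε + ν * ‖gradient f x‖) :
    minSingularValue A / ‖A‖ * infDist (x - α • (gradient f x + e)) {z | A z = A w'} ≤
      ℓ * infDist x {z | A z = A w} + (α * ε + ‖w' - w‖) := by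
  obtain ⟨y, hy, hxy⟩ := (isClosed_eq A.continuous continuous_const).exists_infDist_eq_dist
    ⟨w, rfl⟩ x
  rw [hxy, dist_eq_norm] at hQG ⊢
  have hmove := hc.norm_sub_smul_gradient_add_sub_le hf hL hμ hα hν hstep hℓ hℓsq hLip
    (hgrad y hy) (hQG.trans (by linarith [hc.le_of_gradient_eq_zero (hf y) (hgrad y hy) w])) he
  rw [div_mul_eq_mul_div, div_le_iff₀ (norm_pos_iff.2 hA)]
  calc _ ≤ ‖A‖ * (‖x - α • (gradient f x + e) - y‖ + ‖w' - w‖) :=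
        minSingularValue_mul_infDist_le_opNorm_mul A hy
    _ ≤ _ := by rw [mul_comm]; exact mul_le_mul_of_nonneg_right (by linarith) (norm_nonneg A)

end InexactGradientStep

open Finset

section LinearRecursion

variable {χ ℓ : ℝ} {d q : ℕ → ℝ} {K : ℕ}

theorem le_add_div_of_le_mul_add (hℓ : 0 ≤ ℓ) (hℓχ : ℓ < χ) (hd₁ : 0 ≤ d 1) {qmax : ℝ}
    (hqmax : 0 ≤ qmax) (hq : ∀ k ∈ Ico 1 K, q k ≤ qmax)
    (hrec : ∀ k ∈ Ico 1 K, χ * d (k + 1) ≤ ℓ * d k + q k) :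
    ∀ k ∈ Icc 1 K, d k ≤ d 1 + qmax / (χ - ℓ) := by
  have hχ : 0 < χ - ℓ := sub_pos.2 hℓχ
  set B := d 1 + qmax / (χ - ℓ)
  have hqB : qmax ≤ (χ - ℓ) * B := by
    have : (χ - ℓ) * B = (χ - ℓ) * d 1 + qmax := by simp only [B]; field_simp
    nlinarith
  intro k hk
  obtain ⟨hk1, hkK⟩ := mem_Icc.1 hk
  induction k, hk1 using Nat.le_induction with
  | base => linarith [div_nonneg hqmax hχ.le]
  | succ k hk1 ih =>
    have hk : k ∈ Ico 1 K := mem_Ico.2 ⟨hk1, hkK⟩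
    have := ih (mem_Icc.2 ⟨hk1, by omega⟩) (by omega)
    nlinarith [hrec k hk, hq k hk, mul_le_mul_of_nonneg_left this hℓ]

theorem sub_mul_sum_le_of_le_mul_add (hℓ : 0 ≤ ℓ) (hℓχ : ℓ ≤ χ) (hd : ∀ k, 0 ≤ d k)
    (hrec : ∀ k ∈ Ico 1 K, χ * d (k + 1) ≤ ℓ * d k + q k) :
    (χ - ℓ) * ∑ k ∈ Icc 1 K, d k ≤ χ * d 1 + ∑ k ∈ Ico 1 K, q k := by
  rcases Nat.eq_zero_or_pos K with rfl | hK
  · simpa using mul_nonneg (hℓ.trans hℓχ) (hd 1)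
  -- with the last term `ℓ * d K` kept on the left, the recursion telescopes
  suffices h : (χ - ℓ) * ∑ k ∈ Icc 1 K, d k + ℓ * d K ≤ χ * d 1 + ∑ k ∈ Ico 1 K, q k by
    nlinarith [mul_nonneg hℓ (hd K)]
  induction K, hK using Nat.le_induction with
  | base => simp only [Icc_self, sum_singleton, Ico_self, sum_empty, add_zero]; linarith
  | succ K hK ih =>
    rw [sum_Icc_succ_top (by omega), sum_Ico_succ_top hK]
    nlinarith [ih fun k hk ↦ hrec k (Ico_subset_Ico_right K.le_succ hk),
      hrec K (mem_Ico.2 ⟨hK, K.lt_succ_self⟩)]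

theorem sum_le_mul_div_of_le_mul_add (hℓ : 0 ≤ ℓ) (hℓχ : ℓ < χ) (hd : ∀ k, 0 ≤ d k)
    {qmax : ℝ} (hqmax : 0 ≤ qmax) (hq : ∀ k ∈ Ico 1 K, q k ≤ qmax)
    (hrec : ∀ k ∈ Ico 1 K, χ * d (k + 1) ≤ ℓ * d k + q k) {g : ℕ → ℝ} {c M S : ℝ}
    (hc : 0 ≤ c) (hg : ∀ k ∈ Icc 1 K, g k ≤ c * d k ^ 2)
    (hM : c * (d 1 + qmax / (χ - ℓ)) ≤ M) (hS : χ * d 1 + ∑ k ∈ Ico 1 K, q k ≤ S) :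
    ∑ k ∈ Icc 1 K, g k ≤ M * (S / (χ - ℓ)) := by
  have hχ : 0 < χ - ℓ := sub_pos.2 hℓχ
  have hbound := le_add_div_of_le_mul_add hℓ hℓχ (hd 1) hqmax hq hrec
  have hsum : ∑ k ∈ Icc 1 K, d k ≤ S / (χ - ℓ) := by
    rw [le_div_iff₀ hχ, mul_comm]
    exact (sub_mul_sum_le_of_le_mul_add hℓ hℓχ.le hd hrec).trans hS
  have hB : 0 ≤ d 1 + qmax / (χ - ℓ) := add_nonneg (hd 1) (div_nonneg hqmax hχ.le)
  calc ∑ k ∈ Icc 1 K, g k ≤ ∑ k ∈ Icc 1 K, c * (d 1 + qmax / (χ - ℓ)) * d k :=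
        sum_le_sum fun k hk ↦ (hg k hk).trans <| by
          rw [sq, ← mul_assoc]
          exact mul_le_mul_of_nonneg_right (mul_le_mul_of_nonneg_left (hbound k hk) hc) (hd k)
    _ = c * (d 1 + qmax / (χ - ℓ)) * ∑ k ∈ Icc 1 K, d k := by rw [mul_sum]
    _ ≤ M * (S / (χ - ℓ)) :=
        mul_le_mul hM hsum (sum_nonneg fun k _ ↦ hd k) ((mul_nonneg hc hB).trans hM)

end LinearRecursion

theorem dynamic_regret_inexact_ogd_quadratic_growth_general {n m : ℕ} (K : ℕ)
    (A : EuclideanSpace ℝ (Fin n) →L[ℝ] EuclideanSpace ℝ (Fin m)) (hA : A ≠ 0)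
    (σmin σmax χ : ℝ)
    (hσmin : σmin = sInf {c : ℝ | ∃ x : EuclideanSpace ℝ (Fin n),
      x ≠ 0 ∧ x ∈ (LinearMap.ker (A : EuclideanSpace ℝ (Fin n) →ₗ[ℝ] EuclideanSpace ℝ (Fin m)))ᗮ ∧ c = ‖A x‖ / ‖x‖})
    (hσmax : σmax = ‖A‖) (hχ : χ = σmin / σmax)
    (f : ℕ → EuclideanSpace ℝ (Fin n) → ℝ)
    (hconv : ∀ k, ConvexOn ℝ Set.univ (f k)) (hdiff : ∀ k, Differentiable ℝ (f k))
    (L : ℝ) (hL : 0 < L)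
    (hLip : ∀ k, ∀ u v : EuclideanSpace ℝ (Fin n),
      ‖gradient (f k) u - gradient (f k) v‖ ≤ L * ‖u - v‖)
    (ustar : ℕ → EuclideanSpace ℝ (Fin m))
    (Xstar : ℕ → Set (EuclideanSpace ℝ (Fin n)))
    (hXstar : ∀ k, Xstar k = {x | A x = ustar k})
    (hgrad0 : ∀ k, ∀ y ∈ Xstar k, gradient (f k) y = 0)
    (fstar : ℕ → ℝ) (hfstar : ∀ k, ∀ x ∈ Xstar k, f k x = fstar k)
    (μ : ℝ) (hμ : 0 < μ)
    (hQG : ∀ k, ∀ x : EuclideanSpace ℝ (Fin n),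
      μ / 2 * Metric.infDist x (Xstar k) ^ 2 ≤ f k x - fstar k)
    (ε : ℕ → ℝ) (hεnn : ∀ k, 0 ≤ ε k) (εbar : ℝ) (hεbar : ∀ k, ε k ≤ εbar)
    (ν α : ℝ) (hν : 0 ≤ ν) (hα : 0 < α)
    (hstep : α * L * (1 + ν) ^ 2 < 1)
    (ℓ ζ : ℝ) (hℓpos : 0 < ℓ)
    (hℓsq : ℓ ^ 2 = 1 - μ * α * (1 - α * L * (1 + ν) ^ 2) + 2 * ν * α * L)
    (hℓχ : ℓ < χ) (hζ : ζ = α * (1 + α * L) / ℓ)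
    (x e : ℕ → EuclideanSpace ℝ (Fin n))
    (hrec : ∀ k, 1 ≤ k → k ≤ K →
      x (k + 1) = x k - α • (gradient (f k) (x k) + e k))
    (herr : ∀ k, 1 ≤ k → k ≤ K → ‖e k‖ ≤ ε k + ν * ‖gradient (f k) (x k)‖)
    (xstar : ℕ → EuclideanSpace ℝ (Fin n)) (hxstar : ∀ k, xstar k ∈ Xstar k)
    (σv : ℝ) (hσv : ∀ k, 1 ≤ k → ‖xstar (k + 1) - xstar k‖ ≤ σv)
    (W E : ℝ)
    (hW : W = ∑ k ∈ Finset.Icc 2 K, ‖xstar k - xstar (k - 1)‖)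
    (hE : E = ∑ k ∈ Finset.Icc 1 K, ε k) :
    ∑ k ∈ Finset.Icc 1 K, (f k (x k) - f k (xstar k)) ≤
      (L * (ζ * εbar + σv) / (χ - ℓ) + L * Metric.infDist (x 1) (Xstar 1)) *
        ((‖x 1 - xstar 1‖ + W + ζ * E) / (χ - ℓ)) := by
  replace hσmin : σmin = minSingularValue A := hσmin
  have hχ1 : χ ≤ 1 := by
    rw [hχ, hσmin, hσmax, div_le_one (norm_pos_iff.2 hA)]; exact minSingularValue_le_opNorm A
  have hαζ : α ≤ ζ := by
    rw [hζ, le_div_iff₀ hℓpos]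
    nlinarith [mul_le_mul_of_nonneg_left (hℓχ.le.trans hχ1) hα.le, mul_pos (mul_pos hα hα) hL]
  have hX (k : ℕ) : Xstar k = {z | A z = A (xstar k)} := by
    have hAx : A (xstar k) = ustar k := by simpa [hXstar k] using hxstar k
    rw [hXstar k, hAx]
  set d := fun k ↦ infDist (x k) (Xstar k)
  have hdist_rec : ∀ k ∈ Ico 1 K,
      χ * d (k + 1) ≤ ℓ * d k + (α * ε k + ‖xstar (k + 1) - xstar k‖) := by
    intro k hk
    obtain ⟨hk1, hkK⟩ := mem_Ico.1 hk
    have := (hconv k).minSingularValue_div_opNorm_mul_infDist_le A hA (hdiff k) hL hμ.le hα.le hν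
      hstep.le hℓpos.le hℓsq (hLip k) (hX k ▸ hgrad0 k)
      (by rw [← hX, hfstar k _ (hxstar k)]; exact hQG k (x k)) (herr k hk1 hkK.le)
      (w' := xstar (k + 1))
    rwa [← hrec k hk1 hkK.le, ← hX, ← hX, ← hσmin, ← hσmax, ← hχ] at this
  have hd0 (k : ℕ) : 0 ≤ d k := infDist_nonneg
  have hd1 : d 1 ≤ ‖x 1 - xstar 1‖ := by
    simpa [dist_eq_norm] using infDist_le_dist_of_mem (x := x 1) (hxstar 1)
  have hnum : χ * d 1 + ∑ k ∈ Ico 1 K, (α * ε k + ‖xstar (k + 1) - xstar k‖) ≤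
      ‖x 1 - xstar 1‖ + W + ζ * E := by
    have hW' : ∑ k ∈ Ico 1 K, ‖xstar (k + 1) - xstar k‖ = W := by
      rw [hW, ← Ico_add_one_right_eq_Icc]
      exact sum_Ico_add' (fun k ↦ ‖xstar k - xstar (k - 1)‖) 1 K 1
    have hE' : ∑ k ∈ Ico 1 K, ε k ≤ E :=
      hE ▸ sum_le_sum_of_subset_of_nonneg Ico_subset_Icc_self fun k _ _ ↦ hεnn k
    rw [sum_add_distrib, ← mul_sum, hW']
    nlinarith [mul_le_mul_of_nonneg_left hE' hα.le, mul_le_mul_of_nonneg_right hαζ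
      ((sum_nonneg fun k _ ↦ hεnn k).trans hE'), mul_le_mul_of_nonneg_right hχ1 (hd0 1)]
  have hεbar0 : 0 ≤ εbar := (hεnn 0).trans (hεbar 0)
  have hσv0 : 0 ≤ σv := (norm_nonneg _).trans (hσv 1 le_rfl)
  have hLB : L / 2 * (d 1 + (α * εbar + σv) / (χ - ℓ)) ≤
      L * (ζ * εbar + σv) / (χ - ℓ) + L * d 1 := by
    have : (α * εbar + σv) / (χ - ℓ) ≤ (ζ * εbar + σv) / (χ - ℓ) := by gcongr
    rw [mul_div_assoc]
    nlinarith [hd0 1, div_nonneg (add_nonneg (mul_nonneg hα.le hεbar0) hσv0) (sub_pos.2 hℓχ).le]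
  exact sum_le_mul_div_of_le_mul_add hℓpos.le hℓχ hd0 (qmax := α * εbar + σv) (by positivity)
    (fun k hk ↦ add_le_add (mul_le_mul_of_nonneg_left (hεbar k) hα.le) (hσv k (mem_Ico.1 hk).1))
    hdist_rec (by positivity) (fun k _ ↦ sub_le_half_mul_infDist_sq (hconv k) (hdiff k) (hLip k)
      (hX k ▸ isClosed_eq A.continuous continuous_const) (hxstar k) (hgrad0 k) (x k)) hLB hnum

/-- Theorem 1: dynamic regret of inexact online gradient descent under
quadratic growth, deterministic errors:
`Σ_{k=1}^K (f_k(x_k) − f_k(x_k*)) ≤ [L(ζε + σ_v)/(χ − ℓ) + L·dist(x_1, X_1*)] ·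
 (‖x_1 − x_1*‖ + W_K + ζ E_K)/(χ − ℓ)`. -/
theorem dynamic_regret_inexact_ogd_quadratic_growth {n m : ℕ} (K : ℕ)
    (A : EuclideanSpace ℝ (Fin n) →L[ℝ] EuclideanSpace ℝ (Fin m)) (hA : A ≠ 0)
    (σmin σmax χ : ℝ)
    (hσmin : σmin = sInf {c : ℝ | ∃ x : EuclideanSpace ℝ (Fin n),
      x ≠ 0 ∧ x ∈ (LinearMap.ker (A : EuclideanSpace ℝ (Fin n) →ₗ[ℝ] EuclideanSpace ℝ (Fin m)))ᗮ ∧ c = ‖A x‖ / ‖x‖})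
    (hσmax : σmax = ‖A‖) (hχ : χ = σmin / σmax)
    (f : ℕ → EuclideanSpace ℝ (Fin n) → ℝ)
    (hconv : ∀ k, ConvexOn ℝ Set.univ (f k)) (hdiff : ∀ k, Differentiable ℝ (f k))
    (L : ℝ) (hL : 0 < L)
    (hLip : ∀ k, ∀ u v : EuclideanSpace ℝ (Fin n),
      ‖gradient (f k) u - gradient (f k) v‖ ≤ L * ‖u - v‖)
    (ustar : ℕ → EuclideanSpace ℝ (Fin m)) (hrange : ∀ k, ustar k ∈ Set.range A)
    (Xstar : ℕ → Set (EuclideanSpace ℝ (Fin n)))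
    (hXstar : ∀ k, Xstar k = {x | A x = ustar k})
    (hXmin : ∀ k, Xstar k = {x | ∀ y : EuclideanSpace ℝ (Fin n), f k x ≤ f k y})
    (hgrad0 : ∀ k, ∀ y ∈ Xstar k, gradient (f k) y = 0)
    (fstar : ℕ → ℝ) (hfstar : ∀ k, ∀ x ∈ Xstar k, f k x = fstar k)
    (μ : ℝ) (hμ : 0 < μ)
    (hQG : ∀ k, ∀ x : EuclideanSpace ℝ (Fin n),
      μ / 2 * Metric.infDist x (Xstar k) ^ 2 ≤ f k x - fstar k)
    (ε : ℕ → ℝ) (hεnn : ∀ k, 0 ≤ ε k) (εbar : ℝ) (hεbar : ∀ k, ε k ≤ εbar)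
    (ν α : ℝ) (hν : 0 ≤ ν) (hα : 0 < α)
    (hstep : α * L * (1 + ν) ^ 2 < 1)
    (ℓ ζ : ℝ) (hℓpos : 0 < ℓ)
    (hℓsq : ℓ ^ 2 = 1 - μ * α * (1 - α * L * (1 + ν) ^ 2) + 2 * ν * α * L)
    (hℓχ : ℓ < χ) (hζ : ζ = α * (1 + α * L) / ℓ)
    (x e : ℕ → EuclideanSpace ℝ (Fin n))
    (hrec : ∀ k, 1 ≤ k → k ≤ K →
      x (k + 1) = x k - α • (gradient (f k) (x k) + e k))
    (herr : ∀ k, 1 ≤ k → k ≤ K → ‖e k‖ ≤ ε k + ν * ‖gradient (f k) (x k)‖)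
    (xstar : ℕ → EuclideanSpace ℝ (Fin n)) (hxstar : ∀ k, xstar k ∈ Xstar k)
    (σv : ℝ) (hσv : ∀ k, 1 ≤ k → ‖xstar (k + 1) - xstar k‖ ≤ σv)
    (W E : ℝ)
    (hW : W = ∑ k ∈ Finset.Icc 2 K, ‖xstar k - xstar (k - 1)‖)
    (hE : E = ∑ k ∈ Finset.Icc 1 K, ε k) :
    ∑ k ∈ Finset.Icc 1 K, (f k (x k) - f k (xstar k)) ≤
      (L * (ζ * εbar + σv) / (χ - ℓ) + L * Metric.infDist (x 1) (Xstar 1)) *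
        ((‖x 1 - xstar 1‖ + W + ζ * E) / (χ - ℓ)) :=
  dynamic_regret_inexact_ogd_quadratic_growth_general K A hA σmin σmax χ hσmin hσmax hχ f hconv
    hdiff L hL hLip ustar Xstar hXstar hgrad0 fstar hfstar μ hμ hQG ε hεnn εbar hεbar ν α hν hα
    hstep ℓ ζ hℓpos hℓsq hℓχ hζ x e hrec herr xstar hxstar σv hσv W E hW hE
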